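/- arXiv:2001.07812 — 2 statements merged into one kernel-verified Lean document; each statement's English description precedes it below -/
import Mathlib

section
/- If p > 1/2 is fixed, then the probability that the random cubical complex Q_2(n,p) contains at least one maximal 1-face tends to 0 as n → ∞. -/
open Finset

/-- The 1-skeleton of the `n`-dimensional cube. -/
def cubeGraph (n : ℕ) : SimpleGraph (Fin n → Bool) where
  Adj u v := (Finset.univ.filter fun i => u i ≠ v i).card = 1
  symm := by
    constructor
    intro u v h
    rw [show (Finset.univ.filter fun i => v i ≠ u i)
        = (Finset.univ.filter fun i => u i ≠ v i) from
      Finset.filter_congr fun i _ => ne_comm]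
    exact h
  loopless := by
    constructor
    intro u h
    simp at h

instance cubeGraphAdjDec (n : ℕ) : DecidableRel (cubeGraph n).Adj := fun u v =>
  decidable_of_iff ((Finset.univ.filter fun i => u i ≠ v i).card = 1) Iff.rfl

/-- A 2-face of the `n`-cube in star notation: two free (`none`) coordinates and
`n-2` fixed binary coordinates. Its boundary is a 4-cycle. -/
abbrev TwoFace (n : ℕ) :=
  {x : Fin n → Option Bool // (Finset.univ.filter fun i => x i = none).card = 2}

/-- A vertex `v` of the cube lies on a face `x` (in star notation) iff `v` agrees
with every fixed coordinate of `x`. -/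
def inFace {n : ℕ} (x : Fin n → Option Bool) (v : Fin n → Bool) : Prop :=
  ∀ i b, x i = some b → v i = b

instance {n : ℕ} (x : Fin n → Option Bool) (v : Fin n → Bool) : Decidable (inFace x v) := by
  unfold inFace; infer_instance


/-- The probability, in the random 2-dimensional cubical complex `Q_2(n,p)` (each 2-face
included independently with probability `p`), of seeing exactly the configuration `ω`
of 2-faces. -/
def faceProb (n : ℕ) (p : ℝ) (ω : TwoFace n → Bool) : ℝ :=
  ∏ x : TwoFace n, if ω x then p else 1 - p

/-- The number of maximal 1-faces of the complex with face configuration `ω`: edges of the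
`n`-cube contained in no included 2-face. -/
def maximalCount (n : ℕ) (ω : TwoFace n → Bool) : ℕ :=
  ((cubeGraph n).edgeFinset.filter fun e =>
    ∀ x : TwoFace n, ω x = true → ¬ ∀ v, v ∈ e → inFace x.1 v).card

/-! First moment method. An edge of the cube lies in the `n - 1` two-faces spanned by its own
direction and one other, so it is maximal with probability at most `(1 - p) ^ (n - 1)`. The cube has
`2 ^ (n - 1) * n` edges, hence the expected number of maximal edges is at most
`n * (2 * (1 - p)) ^ (n - 1)`, which tends to `0` when `p > 1/2`; by Markov's inequality so does
the probability that there is one. -/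

open Filter Topology

theorem sum_prod_bernoulli_filter_forall_false {ι : Type*} [Fintype ι] [DecidableEq ι]
    (p : ℝ) (S : Finset ι) :
    ∑ ω ∈ univ.filter (fun ω : ι → Bool => ∀ x ∈ S, ω x = false),
      ∏ x, (if ω x then p else 1 - p) = (1 - p) ^ #S := by
  -- folding the constraint into the factors makes the sum factor over the coordinates
  let g : ι → Bool → ℝ := fun x b =>
    if x ∈ S → b = false then (if b then p else 1 - p) else 0
  have hg : ∀ x, ∑ b, g x b = if x ∈ S then 1 - p else 1 := by
    intro x
    by_cases hx : x ∈ S <;> simp [g, hx]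
  calc ∑ ω ∈ univ.filter (fun ω : ι → Bool => ∀ x ∈ S, ω x = false),
        ∏ x, (if ω x then p else 1 - p)
      = ∑ ω : ι → Bool, ∏ x, g x (ω x) := by
        simp only [sum_filter, g, prod_ite_zero, mem_univ, true_implies]
    _ = ∏ x, ∑ b, g x b := (Fintype.prod_sum g).symm
    _ = (1 - p) ^ #S := by
        simp only [hg, prod_ite_mem, univ_inter, prod_const]

theorem sum_filter_pos_le_sum_mul {α : Type*} (s : Finset α) (f : α → ℕ) (w : α → ℝ)
    (hw : ∀ a ∈ s, 0 ≤ w a) :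
    ∑ a ∈ s.filter (fun a => 0 < f a), w a ≤ ∑ a ∈ s, (f a : ℝ) * w a := by
  rw [sum_filter]
  refine sum_le_sum fun a ha => ?_
  split_ifs with hfa
  · exact le_mul_of_one_le_left (hw a ha) (by exact_mod_cast hfa)
  · exact mul_nonneg (Nat.cast_nonneg _) (hw a ha)

theorem tendsto_mul_pow_pred_atTop_nhds_zero {r : ℝ} (hr0 : 0 ≤ r) (hr1 : r < 1) :
    Tendsto (fun n : ℕ => n * r ^ (n - 1)) atTop (𝓝 0) := by
  rw [← tendsto_add_atTop_iff_nat 1]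
  have h := (tendsto_self_mul_const_pow_of_lt_one hr0 hr1).add
    (tendsto_pow_atTop_nhds_zero_of_lt_one hr0 hr1)
  rw [add_zero] at h
  refine h.congr fun m => ?_
  push_cast
  ring

section Cube

variable {n : ℕ}

theorem exists_eq_update_of_cubeGraph_adj {u v : Fin n → Bool} (h : (cubeGraph n).Adj u v) :
    ∃ i, v = Function.update u i (!u i) := by
  obtain ⟨i, hi⟩ := card_eq_one.mp h
  have hdiff : ∀ k, u k ≠ v k ↔ k = i := fun k => by
    simpa using congrArg (k ∈ ·) hi
  refine ⟨i, funext fun k => ?_⟩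
  by_cases hk : k = i
  · subst hk
    rw [Function.update_self]
    exact Bool.eq_not.mpr ((hdiff k).mpr rfl).symm
  · rw [Function.update_of_ne hk]
    exact (not_not.mp (mt (hdiff k).mp hk)).symm

theorem degree_cubeGraph_le (u : Fin n → Bool) : (cubeGraph n).degree u ≤ n := by
  rw [← SimpleGraph.card_neighborFinset_eq_degree]
  calc #((cubeGraph n).neighborFinset u)
      ≤ #(univ.image fun i => Function.update u i (!u i)) := by
        refine card_le_card fun v hv => ?_
        obtain ⟨i, rfl⟩ :=
          exists_eq_update_of_cubeGraph_adj (((cubeGraph n).mem_neighborFinset u v).mp hv)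
        exact mem_image_of_mem _ (mem_univ i)
    _ ≤ n := card_image_le.trans_eq (card_fin n)

theorem two_mul_card_edgeFinset_cubeGraph_le : 2 * #(cubeGraph n).edgeFinset ≤ 2 ^ n * n := by
  rw [← SimpleGraph.sum_degrees_eq_twice_card_edges]
  calc ∑ v, (cubeGraph n).degree v ≤ ∑ _v : Fin n → Bool, n :=
        sum_le_sum fun v _ => degree_cubeGraph_le v
    _ = 2 ^ n * n := by simp

theorem card_edgeFinset_cubeGraph_le : #(cubeGraph n).edgeFinset ≤ 2 ^ (n - 1) * n := by
  have h := two_mul_card_edgeFinset_cubeGraph_le (n := n)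
  cases n with
  | zero => simpa using h
  | succ m =>
    rw [pow_succ, mul_comm (2 ^ m) 2, mul_assoc] at h
    exact Nat.le_of_mul_le_mul_left h two_pos

end Cube

section Faces

variable {n : ℕ}

def twoFacesContaining (e : Sym2 (Fin n → Bool)) : Finset (TwoFace n) :=
  univ.filter fun x => ∀ v ∈ e, inFace x.1 v

/-- The 2-face through `u` spanned by the directions `i` and `j`. -/
def spanFace (u : Fin n → Bool) (i j : Fin n) : Fin n → Option Bool :=
  fun k => if k = i ∨ k = j then none else some (u k)

theorem card_filter_spanFace_eq_none (u : Fin n → Bool) {i j : Fin n} (hij : i ≠ j) :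
    #(univ.filter fun k => spanFace u i j k = none) = 2 := by
  have : (univ.filter fun k => spanFace u i j k = none) = {i, j} := by
    ext k
    simp [spanFace, or_iff_not_imp_left]
  rw [this, card_pair hij]

theorem inFace_spanFace {u v : Fin n → Bool} {i j : Fin n}
    (hv : ∀ k, k ≠ i → k ≠ j → v k = u k) : inFace (spanFace u i j) v := by
  intro k b hk
  by_cases hij : k = i ∨ k = j
  · simp [spanFace, hij] at hk
  · simp only [spanFace, hij, if_false, Option.some.injEq] at hk
    rw [← hk]
    exact hv k (not_or.mp hij).1 (not_or.mp hij).2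

theorem spanFace_right_injective (u : Fin n → Bool) {i j j' : Fin n} (hj : j ≠ i)
    (h : spanFace u i j = spanFace u i j') : j = j' := by
  by_contra hjj'
  have := congrFun h j
  simp [spanFace, hj, hjj'] at this

theorem le_card_twoFacesContaining_update (u : Fin n → Bool) (i : Fin n) :
    n - 1 ≤ #(twoFacesContaining s(u, Function.update u i (!u i))) := by
  let f : {j // j ≠ i} → TwoFace n := fun j =>
    ⟨spanFace u i j, card_filter_spanFace_eq_none u (Ne.symm j.2)⟩
  have hf : ∀ j, f j ∈ twoFacesContaining s(u, Function.update u i (!u i)) := by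
    intro j
    simp only [twoFacesContaining, mem_filter, mem_univ, true_and, Sym2.mem_iff]
    rintro v (rfl | rfl)
    · exact inFace_spanFace fun _ _ _ => rfl
    · exact inFace_spanFace fun k hki _ => Function.update_of_ne hki _ _
  calc n - 1 = #(univ : Finset {j // j ≠ i}) := by simp
    _ ≤ _ := card_le_card_of_injOn f (fun j _ => hf j)
        fun j _ j' _ h => Subtype.ext (spanFace_right_injective u j.2 (congrArg Subtype.val h))

theorem le_card_twoFacesContaining {e : Sym2 (Fin n → Bool)}
    (he : e ∈ (cubeGraph n).edgeFinset) : n - 1 ≤ #(twoFacesContaining e) := by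
  induction e using Sym2.inductionOn with
  | hf u v =>
    rw [SimpleGraph.mem_edgeFinset, SimpleGraph.mem_edgeSet] at he
    obtain ⟨i, rfl⟩ := exists_eq_update_of_cubeGraph_adj he
    exact le_card_twoFacesContaining_update u i

end Faces

theorem faceProb_nonneg {n : ℕ} {p : ℝ} (hp0 : 0 ≤ p) (hp1 : p ≤ 1)
    (ω : TwoFace n → Bool) : 0 ≤ faceProb n p ω :=
  prod_nonneg fun x _ => by split_ifs <;> linarith

theorem sum_maximalCount_mul_faceProb (n : ℕ) (p : ℝ) :
    ∑ ω, (maximalCount n ω : ℝ) * faceProb n p ω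
      = ∑ e ∈ (cubeGraph n).edgeFinset, (1 - p) ^ #(twoFacesContaining e) := by
  have hmaximal : ∀ (e : Sym2 (Fin n → Bool)) (ω : TwoFace n → Bool),
      (∀ x : TwoFace n, ω x = true → ¬ ∀ v, v ∈ e → inFace x.1 v)
        ↔ ∀ x ∈ twoFacesContaining e, ω x = false := by
    intro e ω
    simp only [twoFacesContaining, mem_filter, mem_univ, true_and]
    exact forall_congr' fun x => by cases ω x <;> simp
  calc ∑ ω, (maximalCount n ω : ℝ) * faceProb n p ω
      = ∑ ω, ∑ e ∈ (cubeGraph n).edgeFinset,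
          if ∀ x ∈ twoFacesContaining e, ω x = false then faceProb n p ω else 0 := by
        simp only [maximalCount, card_filter, Nat.cast_sum, sum_mul, hmaximal]
        push_cast
        simp only [ite_mul, one_mul, zero_mul]
    _ = ∑ e ∈ (cubeGraph n).edgeFinset, (1 - p) ^ #(twoFacesContaining e) := by
        rw [sum_comm]
        refine sum_congr rfl fun e _ => ?_
        rw [← sum_filter]
        exact sum_prod_bernoulli_filter_forall_false p _

theorem sum_maximalCount_mul_faceProb_le (n : ℕ) {p : ℝ} (hp0 : 0 ≤ p) (hp1 : p ≤ 1) :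
    ∑ ω, (maximalCount n ω : ℝ) * faceProb n p ω ≤ n * (2 * (1 - p)) ^ (n - 1) := by
  rw [sum_maximalCount_mul_faceProb]
  calc ∑ e ∈ (cubeGraph n).edgeFinset, (1 - p) ^ #(twoFacesContaining e)
      ≤ ∑ _e ∈ (cubeGraph n).edgeFinset, (1 - p) ^ (n - 1) :=
        sum_le_sum fun e he =>
          pow_le_pow_of_le_one (by linarith) (by linarith) (le_card_twoFacesContaining he)
    _ = #(cubeGraph n).edgeFinset * (1 - p) ^ (n - 1) := by rw [sum_const, nsmul_eq_mul]
    _ ≤ (2 ^ (n - 1) * n : ℕ) * (1 - p) ^ (n - 1) := by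
        gcongr
        exact card_edgeFinset_cubeGraph_le
    _ = n * (2 * (1 - p)) ^ (n - 1) := by push_cast; rw [mul_pow]; ring

/-- For fixed `p > 1/2`, the probability that the random cubical complex `Q_2(n,p)`
contains at least one maximal 1-face tends to `0` as `n → ∞`. -/
theorem no_maximal_edges_whp (p : ℝ) (hp : 1 / 2 < p) (hp1 : p ≤ 1) :
    Filter.Tendsto
      (fun n : ℕ =>
        ∑ ω ∈ Finset.univ.filter fun ω : TwoFace n → Bool => 0 < maximalCount n ω,
          faceProb n p ω)
      Filter.atTop (nhds 0) := by
  have hp0 : 0 ≤ p := by linarith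
  have hprob_le_expectation : ∀ n : ℕ,
      ∑ ω ∈ univ.filter fun ω : TwoFace n → Bool => 0 < maximalCount n ω, faceProb n p ω
        ≤ n * (2 * (1 - p)) ^ (n - 1) := fun n =>
    (sum_filter_pos_le_sum_mul _ _ _ fun ω _ => faceProb_nonneg hp0 hp1 ω).trans
      (sum_maximalCount_mul_faceProb_le n hp0 hp1)
  exact squeeze_zero (fun n => sum_nonneg fun ω _ => faceProb_nonneg hp0 hp1 ω)
    hprob_le_expectation (tendsto_mul_pow_pred_atTop_nhds_zero (by linarith) (by linarith))
end

section
/- For any fixed p ∈ (0,1) there exist a natural number T_p and constants δ, ε > 0 such that for all sufficiently large n, Σ_{s=T_p}^{⌊2^{εn}⌋} g(s) < 2^{−δn}, where g(s) = Σ_{S connected, |S|=s} (1-p)^{b(S)} over connected vertex subsets of the hypercube graph Q^n_1. -/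
/-!
A connected set of `s` vertices arises from a connected set of `s - 1` vertices by adding a
neighbour of one of them (remove a non-cut vertex), so a graph with `N` vertices and maximum
degree `d` has at most `N (s d)^(s-1)` of them, at most `2^n (s n)^s` in the cube. Splitting the
cube along its first coordinate gives the edge-isoperimetric bound: `S` spans at most
`2 |S| ⌊log₂ |S|⌋` ordered adjacent pairs, hence, the cube being `n`-regular,
`b(S) ≥ |S| (n - 2 ⌊log₂ |S|⌋)`. For `s ≤ 2^(εn)` this gives `g(s) ≤ 2^n (n r^n)^s` with
`r = 2^ε (1-p)^(1-2ε)`, and summing the at most `2 · 2^(εn)` terms with `s ≥ T` gives at most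
`2 n^T (2^(1+ε) r^T)^n`. Taking `(1-p)^T < 1/4` and then `ε` small makes `2^(1+ε) r^T < 1/2`,
so the sum is eventually below `2^(-n)`.
-/

open Finset

/-- The edge boundary `b(S)` of a set `S` of vertices of the hypercube: the number of
edges `(u,v)` of `Q^n_1` with `u ∈ S` and `v ∉ S`. -/
def edgeBoundary (n : ℕ) (S : Finset (Fin n → Bool)) : ℕ :=
  ((S ×ˢ Sᶜ).filter fun uv => (cubeGraph n).Adj uv.1 uv.2).card

open scoped Classical in
/-- `g(s) = Σ_S (1-p)^{b(S)}`, the sum over connected vertex subsets `S` of size `s` of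
the hypercube graph `Q^n_1`, where `b(S)` is the edge boundary of `S`. -/
noncomputable def g (n : ℕ) (p : ℝ) (s : ℕ) : ℝ :=
  ∑ S ∈ Finset.univ.filter fun S : Finset (Fin n → Bool) =>
      S.card = s ∧ ((cubeGraph n).induce (S : Set (Fin n → Bool))).Connected,
    (1 - p) ^ edgeBoundary n S

open SimpleGraph Filter Topology

theorem Nat.mul_log_add_mul_log_add_min_le (a b : ℕ) :
    a * Nat.log 2 a + b * Nat.log 2 b + min a b ≤ (a + b) * Nat.log 2 (a + b) := by
  wlog hab : a ≤ b with H
  · have := H b a (by omega)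
    rwa [min_comm, add_comm b a, add_comm (b * _)] at this
  rcases a.eq_zero_or_pos with rfl | ha
  · simp
  have h1 : Nat.log 2 a + 1 ≤ Nat.log 2 (a + b) := by
    rw [← Nat.log_mul_base one_lt_two ha.ne']
    exact Nat.log_mono_right (by omega)
  have h2 : Nat.log 2 b ≤ Nat.log 2 (a + b) := Nat.log_mono_right (by omega)
  rw [min_eq_left hab]
  nlinarith

theorem hammingDist_cons {β : Type*} [DecidableEq β] {n : ℕ} (a b : β) (x y : Fin n → β) :
    hammingDist (Fin.cons a x : Fin (n + 1) → β) (Fin.cons b y) =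
      hammingDist x y + if a = b then 0 else 1 := by
  simp only [hammingDist, card_filter, Fin.sum_univ_succ, Fin.cons_zero, Fin.cons_succ]
  split_ifs <;> simp_all [add_comm]

section ConsSlice

variable {β : Type*} {n : ℕ}

noncomputable def Finset.consSlice (S : Finset (Fin (n + 1) → β)) (a : β) :
    Finset (Fin n → β) :=
  S.preimage (Fin.cons (α := fun _ => β) a) (Fin.cons_right_injective _).injOn

@[simp]
theorem Finset.mem_consSlice {S : Finset (Fin (n + 1) → β)} {a : β} {x : Fin n → β} :
    x ∈ S.consSlice a ↔ Fin.cons a x ∈ S :=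
  Finset.mem_preimage

theorem Finset.sum_eq_sum_consSlice [Fintype β] {M : Type*} [AddCommMonoid M]
    (S : Finset (Fin (n + 1) → β)) (f : (Fin (n + 1) → β) → M) :
    ∑ u ∈ S, f u = ∑ a, ∑ x ∈ S.consSlice a, f (Fin.cons a x) := by
  classical
  rw [← sum_ite_mem_eq, ← (Fin.consEquiv _).sum_comp, Fintype.sum_prod_type]
  simp_rw [← sum_ite_mem_eq (S.consSlice _), mem_consSlice]
  rfl

theorem Finset.card_eq_sum_card_consSlice [Fintype β] (S : Finset (Fin (n + 1) → β)) :
    #S = ∑ a, #(S.consSlice a) := by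
  simpa only [card_eq_sum_ones] using S.sum_eq_sum_consSlice fun _ => 1

end ConsSlice

namespace SimpleGraph

variable {V : Type*} {G : SimpleGraph V}

variable (G) in
theorem card_interedges_eq_sum [DecidableRel G.Adj] (s t : Finset V) :
    #(G.interedges s t) = ∑ u ∈ s, ∑ w ∈ t, if G.Adj u w then 1 else 0 := by
  rw [interedges_def, card_filter, sum_product]

theorem IsRegularOfDegree.card_interedges_compl_add_card_interedges_self
    [Fintype V] [DecidableEq V] [DecidableRel G.Adj] {d : ℕ} (hG : G.IsRegularOfDegree d)
    (S : Finset V) :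
    #(G.interedges S Sᶜ) + #(G.interedges S S) = d * #S := by
  rw [card_interedges_eq_sum, card_interedges_eq_sum, ← sum_add_distrib]
  simp_rw [sum_compl_add_sum, ← card_filter, ← neighborFinset_eq_filter,
    card_neighborFinset_eq_degree, hG _, sum_const, smul_eq_mul, mul_comm]

theorem exists_connected_induce_erase [DecidableEq V] {S : Finset V}
    (hS : (G.induce (S : Set V)).Connected) (hcard : 1 < #S) :
    ∃ v ∈ S, (G.induce (S.erase v : Set V)).Connected ∧ ∃ u ∈ S.erase v, G.Adj u v := by
  have : Nontrivial (S : Set V) :=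
    Set.nontrivial_coe_sort.mpr (one_lt_card_iff_nontrivial.mp hcard)
  obtain ⟨v, hv⟩ := hS.exists_connected_induce_compl_singleton_of_finite_nontrivial
  refine ⟨v, v.2, ?_, ?_⟩
  · let f : (G.induce (S : Set V)).induce {v}ᶜ →g G.induce (S.erase v : Set V) :=
      { toFun := fun x => ⟨x.1.1, mem_erase.2 ⟨fun h => x.2 (Subtype.ext h), x.1.2⟩⟩
        map_rel' := id }
    refine hv.map f fun y => ?_
    have hy := mem_erase.1 y.2
    exact ⟨⟨⟨y, hy.2⟩, fun h => hy.1 (congrArg Subtype.val h)⟩, rfl⟩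
  · obtain ⟨u, hu⟩ := hS.preconnected.exists_adj_of_nontrivial v
    exact ⟨u, mem_erase.2 ⟨fun h => hu.ne (Subtype.ext h.symm), u.2⟩, hu.symm⟩

variable [Fintype V]

variable (G) in
open scoped Classical in
noncomputable def connectedSets (s : ℕ) : Finset (Finset V) :=
  univ.filter fun S => #S = s ∧ (G.induce (S : Set V)).Connected

theorem mem_connectedSets {s : ℕ} {S : Finset V} :
    S ∈ G.connectedSets s ↔ #S = s ∧ (G.induce (S : Set V)).Connected := by
  classical
  simp [connectedSets]

theorem card_connectedSets_one_le : #(G.connectedSets 1) ≤ Fintype.card V := by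
  calc #(G.connectedSets 1) ≤ #(univ.map ⟨singleton, singleton_injective⟩) :=
        card_le_card fun S hS => by
          obtain ⟨v, rfl⟩ := card_eq_one.1 (mem_connectedSets.1 hS).1
          simp
    _ = Fintype.card V := by simp

variable [DecidableEq V] [DecidableRel G.Adj]

theorem connectedSets_succ_subset {s : ℕ} (hs : 0 < s) :
    G.connectedSets (s + 1) ⊆ (G.connectedSets s).biUnion fun T =>
      T.biUnion fun u => (G.neighborFinset u).image (insert · T) := by
  intro S hS
  obtain ⟨hcard, hconn⟩ := mem_connectedSets.1 hS
  obtain ⟨v, hv, hconn', u, hu, huv⟩ := exists_connected_induce_erase hconn (by omega)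
  simp only [mem_biUnion, mem_image, mem_neighborFinset]
  exact ⟨S.erase v, mem_connectedSets.2 ⟨by rw [card_erase_of_mem hv]; omega, hconn'⟩,
    u, hu, v, huv, insert_erase hv⟩

theorem card_connectedSets_succ_le {d s : ℕ} (hd : ∀ v, G.degree v ≤ d) (hs : 0 < s) :
    #(G.connectedSets (s + 1)) ≤ #(G.connectedSets s) * (s * d) := by
  refine (card_le_card (connectedSets_succ_subset hs)).trans (card_biUnion_le_card_mul _ _ _ ?_)
  intro T hT
  rw [← (mem_connectedSets.1 hT).1]
  exact card_biUnion_le_card_mul _ _ _ fun u _ => card_image_le.trans (hd u)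

theorem card_connectedSets_succ_le_pow {d : ℕ} (hd : ∀ v, G.degree v ≤ d) (s : ℕ) :
    #(G.connectedSets (s + 1)) ≤ Fintype.card V * ((s + 1) * d) ^ s := by
  induction s with
  | zero => simpa using card_connectedSets_one_le
  | succ s ih =>
    calc #(G.connectedSets (s + 2)) ≤ #(G.connectedSets (s + 1)) * ((s + 1) * d) :=
          card_connectedSets_succ_le hd s.succ_pos
      _ ≤ Fintype.card V * ((s + 1) * d) ^ s * ((s + 1) * d) := by gcongr
      _ ≤ Fintype.card V * ((s + 2) * d) ^ (s + 1) := by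
          rw [mul_assoc, ← pow_succ]
          gcongr
          omega

end SimpleGraph

section Hypercube

variable {n : ℕ}

theorem cubeGraph_adj_iff {u w : Fin n → Bool} :
    (cubeGraph n).Adj u w ↔ hammingDist u w = 1 := Iff.rfl

theorem cubeGraph_adj_iff_exists_update {u w : Fin n → Bool} :
    (cubeGraph n).Adj u w ↔ ∃ k, w = Function.update u k (!u k) := by
  rw [cubeGraph_adj_iff, hammingDist, card_eq_one]
  constructor
  · rintro ⟨k, hk⟩
    refine ⟨k, funext fun i => ?_⟩
    have hi := congrArg (i ∈ ·) hk
    simp only [mem_filter, mem_univ, true_and, mem_singleton, eq_iff_iff] at hi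
    by_cases h : i = k
    · subst h
      rw [Function.update_self]
      cases hu : u i <;> cases hw : w i <;> simp_all
    · rw [Function.update_of_ne h]
      exact (not_not.mp (mt hi.1 h)).symm
  · rintro ⟨k, rfl⟩
    refine ⟨k, Finset.ext fun i => ?_⟩
    by_cases h : i = k
    · subst h; simp
    · simp [h]

theorem cubeGraph_neighborFinset (u : Fin n → Bool) :
    (cubeGraph n).neighborFinset u = univ.image fun k => Function.update u k (!u k) := by
  ext w
  simp [cubeGraph_adj_iff_exists_update, eq_comm]

theorem cubeGraph_isRegularOfDegree : (cubeGraph n).IsRegularOfDegree n := by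
  intro u
  rw [← card_neighborFinset_eq_degree, cubeGraph_neighborFinset,
    card_image_of_injective _ fun k l hkl => ?_, card_univ, Fintype.card_fin]
  by_contra hne
  have := congrFun hkl k
  simp [Function.update_of_ne hne] at this

theorem cubeGraph_cons_adj_cons {a b : Bool} {x y : Fin n → Bool} :
    (cubeGraph (n + 1)).Adj (Fin.cons a x) (Fin.cons b y) ↔
      if a = b then (cubeGraph n).Adj x y else x = y := by
  rw [cubeGraph_adj_iff, cubeGraph_adj_iff, hammingDist_cons]
  split_ifs <;> simp [hammingDist_eq_zero]

theorem cubeGraph_card_interedges_self_succ (S : Finset (Fin (n + 1) → Bool)) :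
    #((cubeGraph (n + 1)).interedges S S) =
      #((cubeGraph n).interedges (S.consSlice true) (S.consSlice true)) +
      #((cubeGraph n).interedges (S.consSlice false) (S.consSlice false)) +
      2 * #(S.consSlice true ∩ S.consSlice false) := by
  simp only [card_interedges_eq_sum, sum_eq_sum_consSlice S, Fintype.sum_bool,
    cubeGraph_cons_adj_cons, if_true, Bool.true_eq_false, Bool.false_eq_true, if_false,
    sum_add_distrib]
  simp [-mem_consSlice, sum_ite_eq, inter_comm]
  ring

theorem cubeGraph_card_interedges_self_le (S : Finset (Fin n → Bool)) :
    #((cubeGraph n).interedges S S) ≤ 2 * #S * Nat.log 2 #S := by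
  induction n with
  | zero =>
    have hS : (cubeGraph 0).interedges S S = ∅ := by
      ext ⟨u, w⟩
      simpa [mk_mem_interedges_iff] using fun _ _ h => h.ne (Subsingleton.elim u w)
    simp [hS]
  | succ n ih =>
    set A := S.consSlice true
    set B := S.consSlice false
    have hmin : #(A ∩ B) ≤ min #A #B :=
      le_min (card_le_card inter_subset_left) (card_le_card inter_subset_right)
    rw [cubeGraph_card_interedges_self_succ, card_eq_sum_card_consSlice, Fintype.sum_bool]
    calc _ ≤ 2 * #A * Nat.log 2 #A + 2 * #B * Nat.log 2 #B + 2 * min #A #B := by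
          gcongr <;> apply ih
      _ ≤ 2 * (#A + #B) * Nat.log 2 (#A + #B) := by
          have := Nat.mul_log_add_mul_log_add_min_le #A #B
          nlinarith

theorem cubeGraph_edgeBoundary_ge (S : Finset (Fin n → Bool)) :
    #S * (n - 2 * Nat.log 2 #S) ≤ edgeBoundary n S := by
  have hsum := cubeGraph_isRegularOfDegree.card_interedges_compl_add_card_interedges_self S
  have hiso := cubeGraph_card_interedges_self_le S
  have hb : edgeBoundary n S = #((cubeGraph n).interedges S Sᶜ) := rfl
  rw [hb, Nat.mul_sub, mul_comm #S n, ← mul_assoc, mul_comm #S 2]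
  omega

theorem g_eq_sum_connectedSets (p : ℝ) (s : ℕ) :
    g n p s = ∑ S ∈ (cubeGraph n).connectedSets s, (1 - p) ^ edgeBoundary n S := by
  unfold g
  refine sum_congr (Finset.ext fun S => ?_) fun _ _ => rfl
  simp [mem_connectedSets]

theorem g_le (p : ℝ) (hp0 : 0 ≤ p) (hp1 : p ≤ 1) {s : ℕ} (hn : 0 < n) (hs : 0 < s) :
    g n p s ≤ 2 ^ n * ((s * n) ^ s * (1 - p) ^ (s * (n - 2 * Nat.log 2 s))) := by
  have hterm : ∀ S ∈ (cubeGraph n).connectedSets s,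
      (1 - p) ^ edgeBoundary n S ≤ (1 - p) ^ (s * (n - 2 * Nat.log 2 s)) := by
    intro S hS
    rw [← (mem_connectedSets.1 hS).1]
    exact pow_le_pow_of_le_one (by linarith) (by linarith) (cubeGraph_edgeBoundary_ge S)
  have hcount : #((cubeGraph n).connectedSets s) ≤ 2 ^ n * (s * n) ^ s := by
    obtain ⟨t, rfl⟩ := Nat.exists_eq_add_one_of_ne_zero hs.ne'
    calc #((cubeGraph n).connectedSets (t + 1))
        ≤ Fintype.card (Fin n → Bool) * ((t + 1) * n) ^ t :=
          card_connectedSets_succ_le_pow (fun v => (cubeGraph_isRegularOfDegree v).le) t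
      _ ≤ 2 ^ n * ((t + 1) * n) ^ (t + 1) := by
          simp only [Fintype.card_pi, Fintype.card_bool, prod_const, card_univ, Fintype.card_fin]
          gcongr
          · exact Nat.one_le_iff_ne_zero.2 (by positivity)
          · omega
  rw [g_eq_sum_connectedSets, ← mul_assoc]
  refine (sum_le_card_nsmul _ _ _ hterm).trans ?_
  rw [nsmul_eq_mul]
  gcongr
  exact_mod_cast hcount

end Hypercube

section Estimates

variable {n : ℕ} {p ε : ℝ}

theorem g_le_of_le_two_rpow (hp0 : 0 ≤ p) (hp1 : p < 1) (hε : ε ≤ 1 / 2) {s : ℕ} (hn : 0 < n)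
    (hs : 0 < s) (hsε : (s : ℝ) ≤ 2 ^ (ε * n)) :
    g n p s ≤ 2 ^ n * (n * (2 ^ ε * (1 - p) ^ (1 - 2 * ε)) ^ n) ^ s := by
  set q := 1 - p
  set L := Nat.log 2 s
  have hq0 : 0 < q := by linarith
  have hL : (L : ℝ) ≤ ε * n := by
    have : (2 : ℝ) ^ (L : ℝ) ≤ 2 ^ (ε * n) := by
      rw [Real.rpow_natCast]
      exact le_trans (by exact_mod_cast Nat.pow_log_le_self 2 hs.ne') hsε
    exact (Real.rpow_le_rpow_left_iff one_lt_two).1 this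
  have h2L : 2 * L ≤ n := by
    have : (2 * L : ℝ) ≤ n := by nlinarith [(n.cast_nonneg : (0 : ℝ) ≤ n)]
    exact_mod_cast this
  have hq : q ^ (n - 2 * L) ≤ (q ^ (1 - 2 * ε)) ^ n := by
    rw [← Real.rpow_natCast, ← Real.rpow_natCast, ← Real.rpow_mul hq0.le]
    refine Real.rpow_le_rpow_of_exponent_ge hq0 (by linarith) ?_
    push_cast [h2L]
    nlinarith [(n.cast_nonneg : (0 : ℝ) ≤ n)]
  have h2 : (2 : ℝ) ^ (ε * n) = (2 ^ ε) ^ n := by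
    rw [Real.rpow_mul zero_le_two, Real.rpow_natCast]
  calc g n p s ≤ 2 ^ n * ((s * n) ^ s * q ^ (s * (n - 2 * L))) :=
        g_le p hp0 hp1.le hn hs
    _ = 2 ^ n * (s * n * q ^ (n - 2 * L)) ^ s := by rw [pow_mul']; ring
    _ ≤ 2 ^ n * (2 ^ (ε * n) * n * (q ^ (1 - 2 * ε)) ^ n) ^ s := by gcongr
    _ = 2 ^ n * (n * (2 ^ ε * q ^ (1 - 2 * ε)) ^ n) ^ s := by rw [h2, mul_pow]; ring

theorem sum_g_le (hp0 : 0 ≤ p) (hp1 : p < 1) (hε0 : 0 ≤ ε) (hε : ε ≤ 1 / 2) {T : ℕ}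
    (hT : 0 < T) (hn : 0 < n) (hr : n * (2 ^ ε * (1 - p) ^ (1 - 2 * ε)) ^ n ≤ 1) :
    ∑ s ∈ Icc T ⌊(2 : ℝ) ^ (ε * n)⌋₊, g n p s ≤
      2 * n ^ T * (2 * 2 ^ ε * (2 ^ ε * (1 - p) ^ (1 - 2 * ε)) ^ T) ^ n := by
  set r := 2 ^ ε * (1 - p) ^ (1 - 2 * ε)
  set M := ⌊(2 : ℝ) ^ (ε * n)⌋₊
  have hq0 : 0 < 1 - p := by linarith
  have hterm : ∀ s ∈ Icc T M, g n p s ≤ 2 ^ n * (n * r ^ n) ^ T := by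
    intro s hs
    obtain ⟨hTs, hsM⟩ := mem_Icc.1 hs
    refine (g_le_of_le_two_rpow hp0 hp1 hε hn (by omega) ?_).trans ?_
    · exact (Nat.le_floor_iff (by positivity)).1 hsM
    · exact mul_le_mul_of_nonneg_left (pow_le_pow_of_le_one (by positivity) hr hTs)
        (by positivity)
  have hcard : (#(Icc T M) : ℝ) ≤ 2 * 2 ^ (ε * n) := by
    have h1 : (1 : ℝ) ≤ 2 ^ (ε * n) := Real.one_le_rpow one_le_two (by positivity)
    have h2 : (M : ℝ) ≤ 2 ^ (ε * n) := Nat.floor_le (by positivity)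
    have h3 : (#(Icc T M) : ℝ) ≤ M + 1 := by
      exact_mod_cast (by rw [Nat.card_Icc]; omega : #(Icc T M) ≤ M + 1)
    linarith
  have h2 : (2 : ℝ) ^ (ε * n) = (2 ^ ε) ^ n := by
    rw [Real.rpow_mul zero_le_two, Real.rpow_natCast]
  calc ∑ s ∈ Icc T M, g n p s ≤ #(Icc T M) * (2 ^ n * (n * r ^ n) ^ T) := by
        simpa using sum_le_card_nsmul _ _ _ hterm
    _ ≤ 2 * 2 ^ (ε * n) * (2 ^ n * (n * r ^ n) ^ T) := by gcongr
    _ = 2 * n ^ T * (2 * 2 ^ ε * r ^ T) ^ n := by rw [h2]; ring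

theorem exists_small_exponent {q : ℝ} (hq0 : 0 < q) (hq1 : q < 1) {T : ℕ}
    (hT : 2 * q ^ T < 1 / 2) :
    ∃ ε > (0 : ℝ), ε ≤ 1 / 2 ∧ 2 ^ ε * q ^ (1 - 2 * ε) < 1 ∧
      2 * 2 ^ ε * (2 ^ ε * q ^ (1 - 2 * ε)) ^ T < 1 / 2 := by
  have hr : Continuous fun ε : ℝ => (2 : ℝ) ^ ε * q ^ (1 - 2 * ε) := by
    fun_prop (disch := positivity)
  have hα : Continuous fun ε : ℝ => 2 * (2 : ℝ) ^ ε * ((2 : ℝ) ^ ε * q ^ (1 - 2 * ε)) ^ T := by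
    fun_prop (disch := positivity)
  -- at `ε = 0` the two quantities are `q` and `2 q ^ T`
  have h0 : ∀ᶠ ε in 𝓝 (0 : ℝ), ε < 1 / 2 := Iio_mem_nhds (by norm_num)
  have h1 : ∀ᶠ ε in 𝓝 (0 : ℝ), (2 : ℝ) ^ ε * q ^ (1 - 2 * ε) < 1 :=
    hr.continuousAt.eventually_lt continuousAt_const (by simpa using hq1)
  have h2 : ∀ᶠ ε in 𝓝 (0 : ℝ), 2 * (2 : ℝ) ^ ε * ((2 : ℝ) ^ ε * q ^ (1 - 2 * ε)) ^ T < 1 / 2 :=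
    hα.continuousAt.eventually_lt continuousAt_const (by simpa using hT)
  obtain ⟨ε, ⟨hε, hε1, hε2⟩, hεpos⟩ :=
    (((h0.and (h1.and h2)).filter_mono nhdsWithin_le_nhds).and
      (self_mem_nhdsWithin (s := Set.Ioi 0))).exists
  exact ⟨ε, hεpos, hε.le, hε1, hε2⟩

end Estimates

/-- For any fixed `p ∈ (0,1)` there are a natural number `T_p` and constants `δ, ε > 0`
such that for all sufficiently large `n`,
`Σ_{s=T_p}^{⌊2^{εn}⌋} g(s) < 2^{−δn}`. -/
theorem g_sum_small (p : ℝ) (hp0 : 0 < p) (hp1 : p < 1) :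
    ∃ T : ℕ, ∃ δ > (0 : ℝ), ∃ ε > (0 : ℝ), ∃ N : ℕ, ∀ n ≥ N,
      (∑ s ∈ Finset.Icc T ⌊(2 : ℝ) ^ (ε * n)⌋₊, g n p s) < (2 : ℝ) ^ (-δ * n) := by
  have hq0 : 0 < 1 - p := by linarith
  obtain ⟨T, hT⟩ := exists_pow_lt_of_lt_one (show (0 : ℝ) < 1 / 4 by norm_num)
    (show 1 - p < 1 by linarith)
  have hT0 : 0 < T := Nat.pos_of_ne_zero fun h => by norm_num [h] at hT
  obtain ⟨ε, hε0, hε, hr, hα⟩ := exists_small_exponent hq0 (by linarith) (T := T) (by linarith)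
  set r := (2 : ℝ) ^ ε * (1 - p) ^ (1 - 2 * ε)
  set α := 2 * 2 ^ ε * r ^ T
  have hev : ∀ᶠ n : ℕ in atTop, 0 < n ∧ n * r ^ n ≤ 1 ∧ 2 * (n ^ T * (2 * α) ^ n) < 1 := by
    have h1 := (tendsto_pow_const_mul_const_pow_of_lt_one 1 (by positivity) hr).eventually
      (gt_mem_nhds one_pos)
    have h2 := (tendsto_pow_const_mul_const_pow_of_lt_one T (r := 2 * α) (by positivity)
      (by linarith)).eventually (gt_mem_nhds (show (0 : ℝ) < 1 / 2 by norm_num))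
    filter_upwards [eventually_gt_atTop 0, h1, h2] with n hn h1 h2
    exact ⟨hn, by simpa using h1.le, by linarith⟩
  obtain ⟨N, hN⟩ := eventually_atTop.1 hev
  refine ⟨T, 1, one_pos, ε, hε0, N, fun n hn => ?_⟩
  obtain ⟨hn0, hrn, hαn⟩ := hN n hn
  calc ∑ s ∈ Icc T ⌊(2 : ℝ) ^ (ε * n)⌋₊, g n p s ≤ 2 * n ^ T * α ^ n :=
        sum_g_le hp0.le hp1 hε0.le hε hT0 hn0 hrn
    _ = 2 * (n ^ T * (2 * α) ^ n) * ((2 : ℝ) ^ n)⁻¹ := by rw [mul_pow 2 α]; field_simp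
    _ < ((2 : ℝ) ^ n)⁻¹ := mul_lt_of_lt_one_left (by positivity) hαn
    _ = (2 : ℝ) ^ (-1 * n : ℝ) := by
        rw [neg_one_mul, Real.rpow_neg zero_le_two, Real.rpow_natCast]
end
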